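/- arXiv:2310.06354 — 4 statements merged into one kernel-verified Lean document; each statement's English description precedes it below -/
import Mathlib

section
/- Let Δ ≥ 2 and let 𝒮 be a collection (with repetition allowed) of copies of the star K_{1,Δ} on a common vertex set V with |V| = n. Write n = a(2Δ-1) + b with a, b nonnegative integers, a ≥ 1, 0 ≤ b ≤ 2Δ-2, and write b(Δ-1) = k₁(2Δ-1) + k₂ with k₁, k₂ nonnegative integers, 0 ≤ k₂ ≤ Δ. If 𝒮 is rainbow K_{1,Δ}-free, then |𝒮| ≤ a(Δ-1)² + k₁(Δ-1). -/
/-- A copy of the star K_{1,Δ} on the vertex set `V`: a center together with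
a set of `Δ` leaves not containing the center. -/
structure StarGraph (V : Type) (Δ : ℕ) where
  center : V
  leaves : Finset V
  card_leaves : leaves.card = Δ
  center_not_mem : center ∉ leaves

/-- `x` and `y` are adjacent in the star `S`. -/
def StarGraph.Adj {V : Type} {Δ : ℕ} (S : StarGraph V Δ) (x y : V) : Prop :=
  (x = S.center ∧ y ∈ S.leaves) ∨ (y = S.center ∧ x ∈ S.leaves)

/-- The collection `S` has a rainbow star with center `u` and leaf set `L`:
there is an injective (on `L`) assignment of the leaves to members of the
collection such that each edge from `u` to a leaf lies in the assigned star. -/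
def IsRainbowStarAt {V : Type} {Δ t : ℕ} (S : Fin t → StarGraph V Δ) (u : V) (L : Finset V) : Prop :=
  u ∉ L ∧ ∃ g : V → Fin t, Set.InjOn g ↑L ∧ ∀ l ∈ L, (S (g l)).Adj u l

/-- The collection `S` contains a rainbow `K_{1,Δ}`. -/
def HasRainbowStar {V : Type} {Δ t : ℕ} (S : Fin t → StarGraph V Δ) : Prop :=
  ∃ (u : V) (L : Finset V), L.card = Δ ∧ IsRainbowStarAt S u L


/-!
Let `c u` be the number of stars centred at `u` and `D u` the set of centres of stars having `u`
as a leaf. If `c u + #(D u) ≥ Δ`, Hall's theorem yields a rainbow star centred at `u`: a star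
centred at `u` offers all of its `Δ` leaves, and the other stars, chosen with distinct centres,
offer their centres. Hence `c u + #(D u) ≤ Δ - 1` for every `u`. If `p` vertices are centres,
this gives `t ≤ p (Δ - 1)`, and since every centre lies in `D u` for the `Δ` leaves `u` of a star,
also `t + Δ p ≤ n (Δ - 1)`. Balancing the two bounds over `p` gives the claim.
-/

open Finset

theorem StarGraph.Adj.ne {V : Type} {Δ : ℕ} {S : StarGraph V Δ} {x y : V} (h : S.Adj x y) :
    x ≠ y := by
  rintro rfl
  rcases h with ⟨rfl, h⟩ | ⟨rfl, h⟩ <;> exact S.center_not_mem h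

section Collection

variable {V : Type} {Δ t : ℕ} (S : Fin t → StarGraph V Δ)

theorem hasRainbowStar_of_injective {ι : Type} [Fintype ι] [Nonempty ι]
    (hι : Fintype.card ι = Δ) (u : V) (e : ι → Fin t) (he : Function.Injective e)
    (f : ι → V) (hf : Function.Injective f) (hadj : ∀ i, (S (e i)).Adj u (f i)) :
    HasRainbowStar S := by
  classical
  have hinv : ∀ i, Function.invFun f (f i) = i := Function.leftInverse_invFun hf
  refine ⟨u, univ.image f, by rw [card_image_of_injective _ hf, card_univ, hι], ?_,
    e ∘ Function.invFun f, ?_, ?_⟩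
  · simp only [mem_image, mem_univ, true_and, not_exists]
    exact fun i hi => (hadj i).ne hi.symm
  · rintro _ hl _ hl' h
    obtain ⟨i, -, rfl⟩ := mem_image.1 hl
    obtain ⟨j, -, rfl⟩ := mem_image.1 hl'
    simp only [Function.comp_apply, hinv] at h
    rw [he h]
  · intro l hl
    obtain ⟨i, -, rfl⟩ := mem_image.1 hl
    simpa only [Function.comp_apply, hinv] using hadj i

theorem hasRainbowStar_of_incident [Fintype V] (hΔ : 0 < Δ) (u : V) (J : Finset (Fin t))
    (hJ : #J = Δ) (hinc : ∀ i ∈ J, (S i).center = u ∨ u ∈ (S i).leaves)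
    (hinj : Set.InjOn (fun i => (S i).center) {i | i ∈ J ∧ (S i).center ≠ u}) :
    HasRainbowStar S := by
  classical
  let N : J → Finset V := fun i => univ.filter ((S i).Adj u)
  have hall : ∀ s : Finset J, #s ≤ #(s.biUnion N) := by
    intro s
    by_cases hcen : ∃ i ∈ s, (S i).center = u
    · obtain ⟨i, hi, hiu⟩ := hcen
      have hleaves : (S i).leaves ⊆ s.biUnion N := fun l hl =>
        mem_biUnion.2 ⟨i, hi, mem_filter.2 ⟨mem_univ l, Or.inl ⟨hiu.symm, hl⟩⟩⟩
      calc #s ≤ #J := by simpa using card_le_univ s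
        _ = #(S i).leaves := by rw [hJ, (S i).card_leaves]
        _ ≤ #(s.biUnion N) := card_le_card hleaves
    · push Not at hcen
      have hsinj : Set.InjOn (fun i : J => (S i).center) s := fun i hi j _ h =>
        Subtype.ext (hinj ⟨i.2, hcen i hi⟩ ⟨j.2, fun hju => hcen i hi (h.trans hju)⟩ h)
      have himage : s.image (fun i : J => (S i).center) ⊆ s.biUnion N := by
        simp only [subset_iff, mem_image, mem_biUnion]
        rintro _ ⟨i, hi, rfl⟩
        refine ⟨i, hi, mem_filter.2 ⟨mem_univ _, Or.inr ⟨rfl, ?_⟩⟩⟩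
        exact (hinc i i.2).resolve_left (hcen i hi)
      rw [← card_image_of_injOn hsinj]
      exact card_le_card himage
  obtain ⟨f, hf, hfN⟩ := (all_card_le_biUnion_card_iff_exists_injective N).1 hall
  have : Nonempty J := (card_pos.1 (hJ ▸ hΔ)).to_subtype
  exact hasRainbowStar_of_injective S (by simpa using hJ) u Subtype.val Subtype.val_injective
    f hf fun i => (mem_filter.1 (hfN i)).2

variable [DecidableEq V]

def starsCenteredAt (u : V) : Finset (Fin t) :=
  univ.filter fun i => (S i).center = u

def leafCenters (u : V) : Finset V :=
  (univ.filter fun i => u ∈ (S i).leaves).image fun i => (S i).center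

def starCenters : Finset V :=
  univ.image fun i => (S i).center

theorem mem_leafCenters {u v : V} :
    v ∈ leafCenters S u ↔ ∃ i, u ∈ (S i).leaves ∧ (S i).center = v := by
  simp [leafCenters]

theorem card_starsCenteredAt_add_card_leafCenters_lt [Fintype V] (hΔ : 0 < Δ)
    (hfree : ¬ HasRainbowStar S) (u : V) :
    #(starsCenteredAt S u) + #(leafCenters S u) < Δ := by
  by_contra! hge
  obtain ⟨I, hIsub, hIinj, hIimg⟩ := exists_subset_injOn_image_eq_of_surjOn
    {i | u ∈ (S i).leaves} (leafCenters S u) (by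
      rintro v hv
      obtain ⟨i, hi, rfl⟩ := (mem_leafCenters S).1 hv
      exact ⟨i, hi, rfl⟩)
  have hdisj : Disjoint (starsCenteredAt S u) I := by
    refine disjoint_left.2 fun i hi hiI => (S i).center_not_mem ?_
    rw [(mem_filter.1 hi).2]
    exact hIsub hiI
  have hcard : Δ ≤ #(starsCenteredAt S u ∪ I) := by
    rwa [card_union_of_disjoint hdisj, ← card_image_of_injOn hIinj, hIimg]
  obtain ⟨J, hJsub, hJ⟩ := exists_subset_card_eq hcard
  have hnotcen : ∀ i ∈ J, (S i).center ≠ u → i ∈ I := fun i hi hiu =>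
    (mem_union.1 (hJsub hi)).resolve_left fun h => hiu (mem_filter.1 h).2
  refine hfree (hasRainbowStar_of_incident S hΔ u J hJ (fun i hi => ?_) ?_)
  · by_cases hiu : (S i).center = u
    · exact Or.inl hiu
    · exact Or.inr (hIsub (hnotcen i hi hiu))
  · rintro i ⟨hi, hiu⟩ j ⟨hj, hju⟩ h
    exact hIinj (hnotcen i hi hiu) (hnotcen j hj hju) h

theorem card_le_card_starCenters_mul [Fintype V] (hΔ : 0 < Δ) (hfree : ¬ HasRainbowStar S) :
    t ≤ #(starCenters S) * (Δ - 1) := by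
  calc t = #(univ : Finset (Fin t)) := by simp
    _ ≤ (Δ - 1) * #(starCenters S) := card_le_mul_card_image _ _ fun v _ => by
        have := card_starsCenteredAt_add_card_leafCenters_lt S hΔ hfree v
        unfold starsCenteredAt at this
        omega
    _ = #(starCenters S) * (Δ - 1) := mul_comm _ _

theorem mul_card_starCenters_le_sum_card_leafCenters [Fintype V] :
    Δ * #(starCenters S) ≤ ∑ u, #(leafCenters S u) := by
  have hcount : ∀ v ∈ starCenters S, Δ ≤ #(univ.filter fun u => v ∈ leafCenters S u) := by
    intro v hv
    obtain ⟨i, -, rfl⟩ := mem_image.1 hv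
    calc Δ = #(S i).leaves := (S i).card_leaves.symm
      _ ≤ _ := card_le_card fun u hu =>
        mem_filter.2 ⟨mem_univ u, (mem_leafCenters S).2 ⟨i, hu, rfl⟩⟩
  calc Δ * #(starCenters S) ≤ ∑ v ∈ starCenters S, #(univ.filter fun u => v ∈ leafCenters S u) :=
        by simpa [mul_comm] using sum_le_sum hcount
    _ ≤ ∑ v, #(univ.filter fun u => v ∈ leafCenters S u) :=
        sum_le_sum_of_subset (subset_univ _)
    _ = ∑ u, #(leafCenters S u) := by
        simpa [bipartiteAbove, bipartiteBelow] using
          (sum_card_bipartiteAbove_eq_sum_card_bipartiteBelow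
            (s := univ) (t := univ) (fun u v => v ∈ leafCenters S u)).symm

theorem add_mul_card_starCenters_le [Fintype V] (hΔ : 0 < Δ) (hfree : ¬ HasRainbowStar S) :
    t + Δ * #(starCenters S) ≤ Fintype.card V * (Δ - 1) := by
  have ht : t = ∑ u, #(starsCenteredAt S u) := by
    simpa [starsCenteredAt] using card_eq_sum_card_fiberwise (f := fun i => (S i).center) (s := univ)
      (t := univ) fun _ _ => mem_univ _
  calc t + Δ * #(starCenters S)
      ≤ ∑ u, (#(starsCenteredAt S u) + #(leafCenters S u)) := by
        rw [sum_add_distrib, ← ht]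
        exact Nat.add_le_add_left (mul_card_starCenters_le_sum_card_leafCenters S) _
    _ ≤ ∑ _u : V, (Δ - 1) := sum_le_sum fun u _ => by
        have := card_starsCenteredAt_add_card_leafCenters_lt S hΔ hfree u
        omega
    _ = Fintype.card V * (Δ - 1) := by simp

end Collection

theorem le_of_le_mul_pred_of_add_mul_le {Δ n a b k₁ k₂ p t : ℕ} (hΔ : 0 < Δ)
    (hn : n = a * (2 * Δ - 1) + b) (hbk : b * (Δ - 1) = k₁ * (2 * Δ - 1) + k₂) (hk₂ : k₂ ≤ Δ)
    (hp : t ≤ p * (Δ - 1)) (hnp : t + Δ * p ≤ n * (Δ - 1)) :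
    t ≤ a * (Δ - 1) ^ 2 + k₁ * (Δ - 1) := by
  obtain ⟨d, rfl⟩ : ∃ d, Δ = d + 1 := ⟨Δ - 1, by omega⟩
  have h2 : 2 * (d + 1) - 1 = 2 * d + 1 := by omega
  simp only [Nat.add_sub_cancel, h2] at hn hbk hp hnp ⊢
  have hnd : n * d = (a * d + k₁) * (2 * d + 1) + k₂ := by rw [hn]; linarith
  rcases le_or_gt p (a * d + k₁) with hsmall | hlarge
  · calc t ≤ p * d := hp
      _ ≤ (a * d + k₁) * d := Nat.mul_le_mul_right d hsmall
      _ = a * d ^ 2 + k₁ * d := by ring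
  · nlinarith

theorem starGraph_bound_small_k2_general {V : Type} [Fintype V]
    (Δ n a b k₁ k₂ t : ℕ) (hΔ : 2 ≤ Δ)
    (hcard : Fintype.card V = n)
    (hn : n = a * (2 * Δ - 1) + b)
    (hbk : b * (Δ - 1) = k₁ * (2 * Δ - 1) + k₂) (hk₂ : k₂ ≤ Δ)
    (S : Fin t → StarGraph V Δ) (hfree : ¬ HasRainbowStar S) :
    t ≤ a * (Δ - 1) ^ 2 + k₁ * (Δ - 1) := by
  classical
  have hΔ₀ : 0 < Δ := by omega
  refine le_of_le_mul_pred_of_add_mul_le hΔ₀ hn hbk hk₂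
    (card_le_card_starCenters_mul S hΔ₀ hfree) ?_
  rw [← hcard]
  exact add_mul_card_starCenters_le S hΔ₀ hfree

theorem starGraph_bound_small_k2 {V : Type} [Fintype V]
    (Δ n a b k₁ k₂ t : ℕ) (hΔ : 2 ≤ Δ)
    (hcard : Fintype.card V = n)
    (hn : n = a * (2 * Δ - 1) + b) (ha : 1 ≤ a) (hb : b ≤ 2 * Δ - 2)
    (hbk : b * (Δ - 1) = k₁ * (2 * Δ - 1) + k₂) (hk₂ : k₂ ≤ Δ)
    (S : Fin t → StarGraph V Δ) (hfree : ¬ HasRainbowStar S) :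
    t ≤ a * (Δ - 1) ^ 2 + k₁ * (Δ - 1) :=
  starGraph_bound_small_k2_general Δ n a b k₁ k₂ t hΔ hcard hn hbk hk₂ S hfree
end

section
/- Let Δ ≥ 2 and let V be a vertex set with |V| = n = a(2Δ-1) + b, where a, b are nonnegative integers, a ≥ 1, 0 ≤ b ≤ 2Δ-2, and b(Δ-1) = k₁(2Δ-1) + k₂ with k₁, k₂ nonnegative integers and 0 ≤ k₂ ≤ Δ. Then there exists a collection 𝒮 (with repetition allowed) of copies of the star K_{1,Δ} on V with |𝒮| = a(Δ-1)² + k₁(Δ-1) such that 𝒮 is rainbow K_{1,Δ}-free. -/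
open Finset Function

section Rainbow

variable {V : Type} {Δ t : ℕ} {S : Fin t → StarGraph V Δ} {u : V} {L : Finset V}

theorem IsRainbowStarAt.card_le_of_adj_mem {β : Type*} {f : V → β} (hf : Injective f)
    {T : Finset β} (hT : ∀ i v, (S i).Adj u v → f v ∈ T) (h : IsRainbowStarAt S u L) :
    L.card ≤ T.card := by
  obtain ⟨-, g, -, hg⟩ := h
  exact card_le_card_of_injOn f (fun l hl => hT _ _ (hg l hl)) hf.injOn

theorem IsRainbowStarAt.card_le_of_adj_index_mem {I : Finset (Fin t)}
    (hI : ∀ i v, (S i).Adj u v → i ∈ I) (h : IsRainbowStarAt S u L) : L.card ≤ I.card := by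
  obtain ⟨-, g, hg_inj, hg⟩ := h
  exact card_le_card_of_injOn g (fun l hl => hI _ _ (hg l hl)) hg_inj

end Rainbow

theorem exists_lt_div_eq_of_lt_mul {Δ m d j r : ℕ} (hr : r < Δ) (hlt : j * Δ + r < d * m) :
    ∃ q < d, (q * m + (j * Δ + r) % m) / Δ = j := by
  have hm : 0 < m := Nat.pos_of_ne_zero fun h => by simp [h] at hlt
  refine ⟨(j * Δ + r) / m, (Nat.div_lt_iff_lt_mul hm).mpr hlt, ?_⟩
  rw [Nat.div_add_mod', Nat.mul_comm, Nat.mul_add_div (by omega), Nat.div_eq_of_lt hr, add_zero]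

def cyclicBlock {Δ m : ℕ} (hΔm : Δ ≤ m) (j : ℕ) : Fin Δ ↪ Fin m where
  toFun r := ⟨(j * Δ + r) % m, Nat.mod_lt _ (r.pos.trans_le hΔm)⟩
  inj' r₁ r₂ h := by
    have h' : j * Δ + r₁ ≡ j * Δ + r₂ [MOD m] := congrArg Fin.val h
    have := h'.add_left_cancel' (j * Δ)
    ext
    rwa [Nat.ModEq, Nat.mod_eq_of_lt (by omega), Nat.mod_eq_of_lt (by omega)] at this

@[simp]
theorem cyclicBlock_apply_val {Δ m : ℕ} (hΔm : Δ ≤ m) (j : ℕ) (r : Fin Δ) :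
    (cyclicBlock hΔm j r : ℕ) = (j * Δ + r) % m :=
  rfl

section CyclicStar

variable {V : Type} {Δ M m : ℕ} (e : V ≃ Fin M ⊕ Fin m) (hΔm : Δ ≤ m)

def cyclicStar (j : Fin M) : StarGraph V Δ where
  center := e.symm (.inl j)
  leaves := univ.map ((cyclicBlock hΔm j).trans (Embedding.inr.trans e.symm.toEmbedding))
  card_leaves := by simp
  center_not_mem := by simp

variable {e hΔm}

theorem cyclicStar_adj_of_inl {j i : Fin M} {u v : V} (hu : e u = .inl i)
    (hadj : (cyclicStar e hΔm j).Adj u v) : i = j := by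
  rcases hadj with ⟨rfl, -⟩ | ⟨-, hu'⟩
  · simpa [cyclicStar, eq_comm] using hu
  · obtain ⟨r, -, rfl⟩ := mem_map.mp hu'
    simp at hu

theorem cyclicStar_adj_of_inr {j : Fin M} {w : Fin m} {u v : V} (hu : e u = .inr w)
    (hadj : (cyclicStar e hΔm j).Adj u v) : e v = .inl j ∧ ∃ r, cyclicBlock hΔm j r = w := by
  rcases hadj with ⟨rfl, -⟩ | ⟨rfl, hu'⟩
  · simp [cyclicStar] at hu
  · obtain ⟨r, -, rfl⟩ := mem_map.mp hu'
    exact ⟨by simp [cyclicStar], r, by simpa using hu⟩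

variable (e hΔm)

def cyclicStarFamily (d : ℕ) (i : Fin (M * d)) : StarGraph V Δ :=
  cyclicStar e hΔm (finProdFinEquiv.symm i).1

theorem cyclicStarFamily_not_hasRainbowStar {d : ℕ} (hdΔ : d < Δ) (hcap : M * Δ ≤ m * d) :
    ¬ HasRainbowStar (cyclicStarFamily e hΔm d) := by
  rintro ⟨u, L, hL, hrainbow⟩
  cases hu : e u with
  | inl j =>
    have hle := hrainbow.card_le_of_adj_index_mem
      (I := univ.map ((Embedding.sectR j (Fin d)).trans finProdFinEquiv.toEmbedding))
      fun i v hadj => mem_map.mpr ⟨(finProdFinEquiv.symm i).2, mem_univ _, by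
        rw [cyclicStar_adj_of_inl hu hadj]
        exact finProdFinEquiv.apply_symm_apply i⟩
    simp only [card_map, card_univ, Fintype.card_fin] at hle
    omega
  | inr w =>
    have hle := hrainbow.card_le_of_adj_mem
      (f := fun v => (finSumFinEquiv (e v) : ℕ))
      (Fin.val_injective.comp (finSumFinEquiv.injective.comp e.injective))
      (T := (range d).image fun q => (q * m + w) / Δ) fun i v hadj => by
        obtain ⟨hv, r, rfl⟩ := cyclicStar_adj_of_inr hu hadj
        set j := (finProdFinEquiv.symm i).1
        have hlt : j * Δ + r < d * m := by
          calc j * Δ + r < (j + 1) * Δ := by rw [Nat.succ_mul]; omega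
            _ ≤ M * Δ := Nat.mul_le_mul_right _ j.isLt
            _ ≤ d * m := by rw [Nat.mul_comm d]; exact hcap
        obtain ⟨q, hq, hqj⟩ := exists_lt_div_eq_of_lt_mul r.isLt hlt
        exact mem_image.mpr ⟨q, mem_range.mpr hq, by simpa [hv] using hqj⟩
    have := card_image_le.trans_eq (card_range d) |>.trans' hle
    omega

end CyclicStar

theorem exists_not_hasRainbowStar_of_mul_le {V : Type} [Fintype V] {Δ d M m : ℕ}
    (hcard : Fintype.card V = M + m) (hΔm : Δ ≤ m) (hdΔ : d < Δ) (hcap : M * Δ ≤ m * d) :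
    ∃ S : Fin (M * d) → StarGraph V Δ, ¬ HasRainbowStar S :=
  let e := (Fintype.equivFinOfCardEq hcard).trans finSumFinEquiv.symm
  ⟨cyclicStarFamily e hΔm d, cyclicStarFamily_not_hasRainbowStar e hΔm hdΔ hcap⟩

theorem starGraph_extremal_exists_small_k2_general {V : Type} [Fintype V]
    (Δ n a b k₁ k₂ : ℕ) (hΔ : 2 ≤ Δ)
    (hcard : Fintype.card V = n)
    (hn : n = a * (2 * Δ - 1) + b) (ha : 1 ≤ a)
    (hbk : b * (Δ - 1) = k₁ * (2 * Δ - 1) + k₂) :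
    ∃ S : Fin (a * (Δ - 1) ^ 2 + k₁ * (Δ - 1)) → StarGraph V Δ,
      ¬ HasRainbowStar S := by
  obtain ⟨c, rfl⟩ : ∃ c, Δ = c + 2 := ⟨Δ - 2, by omega⟩
  have hpred : c + 2 - 1 = c + 1 := rfl
  have hodd : 2 * (c + 2) - 1 = 2 * c + 3 := by omega
  rw [hpred, hodd] at hbk
  rw [hodd] at hn
  rw [hpred]
  have hk₁b : k₁ ≤ b := by nlinarith
  obtain ⟨b', rfl⟩ : ∃ b', b = k₁ + b' := ⟨b - k₁, by omega⟩
  have hsize : a * (c + 1) ^ 2 + k₁ * (c + 1) = (a * (c + 1) + k₁) * (c + 1) := by ring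
  rw [hsize]
  refine exists_not_hasRainbowStar_of_mul_le (m := a * (c + 2) + b') ?_ ?_ (by omega) ?_
  · rw [hcard, hn]; ring
  · nlinarith
  · nlinarith

theorem starGraph_extremal_exists_small_k2 {V : Type} [Fintype V]
    (Δ n a b k₁ k₂ : ℕ) (hΔ : 2 ≤ Δ)
    (hcard : Fintype.card V = n)
    (hn : n = a * (2 * Δ - 1) + b) (ha : 1 ≤ a) (hb : b ≤ 2 * Δ - 2)
    (hbk : b * (Δ - 1) = k₁ * (2 * Δ - 1) + k₂) (hk₂ : k₂ ≤ Δ) :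
    ∃ S : Fin (a * (Δ - 1) ^ 2 + k₁ * (Δ - 1)) → StarGraph V Δ,
      ¬ HasRainbowStar S :=
  starGraph_extremal_exists_small_k2_general Δ n a b k₁ k₂ hΔ hcard hn ha hbk
end

section
/- Let n ≥ 2 and let 𝒯 = {T₁,…,T_t} be a collection (with repetition allowed) of trees on a common vertex set V, where |V| = m, each T_i is a tree with exactly n vertices (V(T_i) ⊆ V), and n divides m. If 𝒯 contains no rainbow tree with n vertices, then t ≤ m(n-2)/n. -/
/-- `R` is a rainbow tree in the collection `T`: `R` (a subgraph of the complete graph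
on `V`, i.e. a graph on a subset of `V`) is a tree, and there is an injective assignment
of its edges to members of the collection such that each edge lies in the assigned graph. -/
def IsRainbowSubtree {V ι : Type} (T : ι → (⊤ : SimpleGraph V).Subgraph)
    (R : (⊤ : SimpleGraph V).Subgraph) : Prop :=
  R.coe.IsTree ∧
    ∃ g : Sym2 V → ι, Set.InjOn g R.edgeSet ∧ ∀ e ∈ R.edgeSet, e ∈ (T (g e)).edgeSet

/-- The collection `T` contains a rainbow tree with `n` vertices. -/
def HasRainbowTree {V ι : Type} (T : ι → (⊤ : SimpleGraph V).Subgraph) (n : ℕ) : Prop :=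
  ∃ R : (⊤ : SimpleGraph V).Subgraph, IsRainbowSubtree T R ∧ R.verts.ncard = n

/-!
If a vertex `v` lies in `n - 1` of the trees, a rainbow tree on `n` vertices grows greedily
from `v`: while the current rainbow tree has fewer than `n` vertices, the next unused tree
through `v` has a vertex outside it and, being connected, an edge leaving it; that edge is
added as a leaf and coloured by that tree. So every vertex lies in at most `n - 2` of the
trees, and double counting vertex–tree incidences gives `t n ≤ m (n - 2)`.
-/

open Finset SimpleGraph

namespace SimpleGraph.Subgraph

variable {V : Type} {G : SimpleGraph V}

lemma ncard_coe_edgeSet (H : G.Subgraph) : H.coe.edgeSet.ncard = H.edgeSet.ncard := by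
  rw [← image_coe_edgeSet_coe, Set.ncard_image_of_injective _
    (Sym2.map.injective Subtype.val_injective)]

lemma isTree_coe_iff [Finite V] {H : G.Subgraph} :
    H.coe.IsTree ↔ H.Connected ∧ H.edgeSet.ncard + 1 = H.verts.ncard := by
  rw [isTree_iff_connected_and_card, Nat.card_coe_set_eq, Nat.card_coe_set_eq, ncard_coe_edgeSet]
  exact and_congr_left' Subgraph.connected_iff'.symm

lemma Connected.exists_adj_mem_notMem {H : G.Subgraph} (hH : H.Connected) {s : Set V} {u v : V}
    (hu : u ∈ H.verts) (hv : v ∈ H.verts) (hus : u ∈ s) (hvs : v ∉ s) :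
    ∃ x y, x ∈ s ∧ y ∉ s ∧ H.Adj x y := by
  obtain ⟨p⟩ := hH.preconnected ⟨u, hu⟩ ⟨v, hv⟩
  obtain ⟨d, -, hd₁, hd₂⟩ := p.exists_boundary_dart (Subtype.val ⁻¹' s) hus hvs
  exact ⟨d.fst, d.snd, hd₁, hd₂, d.adj⟩

lemma verts_sup_subgraphOfAdj {R : G.Subgraph} {x y : V} (hx : x ∈ R.verts) (hxy : G.Adj x y) :
    (R ⊔ G.subgraphOfAdj hxy).verts = insert y R.verts := by
  rw [verts_sup, subgraphOfAdj_verts]; grind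

lemma edgeSet_sup_subgraphOfAdj (R : G.Subgraph) {x y : V} (hxy : G.Adj x y) :
    (R ⊔ G.subgraphOfAdj hxy).edgeSet = insert s(x, y) R.edgeSet := by
  rw [edgeSet_sup, edgeSet_subgraphOfAdj, Set.union_singleton]

lemma mk_notMem_edgeSet_of_notMem_verts (R : G.Subgraph) (x : V) {y : V} (hy : y ∉ R.verts) :
    s(x, y) ∉ R.edgeSet :=
  fun h => hy (R.mem_verts_of_mem_edge h (Sym2.mem_mk_right x y))

lemma isTree_coe_sup_subgraphOfAdj [Finite V] {R : G.Subgraph} (hR : R.coe.IsTree) {x y : V}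
    (hx : x ∈ R.verts) (hy : y ∉ R.verts) (hxy : G.Adj x y) :
    (R ⊔ G.subgraphOfAdj hxy).coe.IsTree := by
  rw [isTree_coe_iff] at hR ⊢
  refine ⟨connected_sup hR.1.preconnected (subgraphOfAdj_connected hxy).preconnected
    ⟨x, hx, by simp⟩, ?_⟩
  rw [verts_sup_subgraphOfAdj hx, edgeSet_sup_subgraphOfAdj,
    Set.ncard_insert_of_notMem (R.mk_notMem_edgeSet_of_notMem_verts x hy),
    Set.ncard_insert_of_notMem hy, hR.2]

end SimpleGraph.Subgraph

section Rainbow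

variable {V ι : Type} [Finite V] (T : ι → (⊤ : SimpleGraph V).Subgraph)

lemma exists_rainbowSubtree_colored_by [Nonempty ι] (v : V) (S : Finset ι)
    (hconn : ∀ i ∈ S, (T i).Connected) (hv : ∀ i ∈ S, v ∈ (T i).verts)
    (hcard : ∀ i ∈ S, #S < (T i).verts.ncard) :
    ∃ (R : (⊤ : SimpleGraph V).Subgraph) (g : Sym2 V → ι), R.coe.IsTree ∧
      Set.InjOn g R.edgeSet ∧ (∀ e ∈ R.edgeSet, g e ∈ S ∧ e ∈ (T (g e)).edgeSet) ∧
      v ∈ R.verts ∧ R.verts.ncard = #S + 1 := by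
  classical
  induction S using Finset.induction_on with
  | empty =>
    exact ⟨(⊤ : SimpleGraph V).singletonSubgraph v, fun _ => Classical.arbitrary ι,
      IsTree.coe_singletonSubgraph _ v, by simp, by simp, rfl, by simp⟩
  | insert i S hiS ih =>
    obtain ⟨R, g, hR, hinj, hcol, hvR, hRcard⟩ := ih
      (fun j hj => hconn j (mem_insert_of_mem hj)) (fun j hj => hv j (mem_insert_of_mem hj))
      (fun j hj => (card_le_card (subset_insert i S)).trans_lt (hcard j (mem_insert_of_mem hj)))
    have hRi : R.verts.ncard < (T i).verts.ncard := by
      rw [hRcard, ← card_insert_of_notMem hiS]; exact hcard i (mem_insert_self i S)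
    obtain ⟨u, huT, huR⟩ := Set.exists_mem_notMem_of_ncard_lt_ncard hRi
    obtain ⟨x, y, hxR, hyR, hxy⟩ := (hconn i (mem_insert_self i S)).exists_adj_mem_notMem
      (hv i (mem_insert_self i S)) huT hvR huR
    have hxy' : (⊤ : SimpleGraph V).Adj x y := (T i).adj_sub hxy
    have hnew := R.mk_notMem_edgeSet_of_notMem_verts x hyR
    have hg : Set.EqOn (Function.update g s(x, y) i) g R.edgeSet := fun e he =>
      Function.update_of_ne (ne_of_mem_of_not_mem he hnew) _ _
    refine ⟨R ⊔ (⊤ : SimpleGraph V).subgraphOfAdj hxy', Function.update g s(x, y) i,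
      Subgraph.isTree_coe_sup_subgraphOfAdj hR hxR hyR hxy', ?_, ?_, ?_, ?_⟩
    · rw [Subgraph.edgeSet_sup_subgraphOfAdj, Set.injOn_insert hnew, Function.update_self,
        hg.image_eq]
      refine ⟨hinj.congr hg.symm, ?_⟩
      rintro ⟨e, he, hge⟩
      exact hiS (hge ▸ (hcol e he).1)
    · rw [Subgraph.edgeSet_sup_subgraphOfAdj]
      rintro e (rfl | he)
      · rw [Function.update_self]
        exact ⟨mem_insert_self i S, hxy⟩
      · rw [hg he]
        exact ⟨mem_insert_of_mem (hcol e he).1, (hcol e he).2⟩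
    · exact Or.inl hvR
    · rw [Subgraph.verts_sup_subgraphOfAdj hxR, card_insert_of_notMem hiS, ← hRcard,
        Set.ncard_insert_of_notMem hyR]

lemma card_le_of_forall_mem_verts_of_not_hasRainbowTree {n : ℕ} (hn : 1 ≤ n)
    (hconn : ∀ i, (T i).Connected) (hverts : ∀ i, (T i).verts.ncard = n)
    (hfree : ¬ HasRainbowTree T n) (v : V) (S : Finset ι) (hS : ∀ i ∈ S, v ∈ (T i).verts) :
    #S ≤ n - 2 := by
  by_contra! hlt
  obtain ⟨S', hS'S, hS'card⟩ := exists_subset_card_eq (show n - 1 ≤ #S by omega)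
  obtain ⟨i, -⟩ := card_pos.mp (show 0 < #S by omega)
  have : Nonempty ι := ⟨i⟩
  obtain ⟨R, g, hR, hinj, hcol, -, hRcard⟩ := exists_rainbowSubtree_colored_by T v S'
    (fun i _ => hconn i) (fun i hi => hS i (hS'S hi)) (fun i _ => by rw [hverts i]; omega)
  exact hfree ⟨R, ⟨hR, g, hinj, fun e he => (hcol e he).2⟩, by omega⟩

end Rainbow

theorem tree_transversal_bound_general {V : Type} [Fintype V]
    (n m t : ℕ) (hn : 2 ≤ n)
    (hm : Fintype.card V = m)
    (T : Fin t → (⊤ : SimpleGraph V).Subgraph)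
    (htree : ∀ i, (T i).coe.IsTree) (hverts : ∀ i, (T i).verts.ncard = n)
    (hfree : ¬ HasRainbowTree T n) :
    t ≤ m * (n - 2) / n := by
  classical
  have hdeg (v : V) : #{i | v ∈ (T i).verts} ≤ n - 2 :=
    card_le_of_forall_mem_verts_of_not_hasRainbowTree T (by omega)
      (fun i => ⟨(htree i).connected⟩) hverts hfree v _ (fun i hi => (mem_filter.mp hi).2)
  rw [Nat.le_div_iff_mul_le (by omega)]
  have hsize (i : Fin t) : n ≤ #(univ.bipartiteAbove (fun i v => v ∈ (T i).verts) i) := by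
    rw [← hverts i, bipartiteAbove, ← Set.ncard_coe_finset]
    simp
  simpa [hm] using card_mul_le_card_mul (s := univ) (t := univ) _ (fun i _ => hsize i)
    (fun v _ => hdeg v)

theorem tree_transversal_bound {V : Type} [Fintype V]
    (n m t : ℕ) (hn : 2 ≤ n)
    (hm : Fintype.card V = m) (hdvd : n ∣ m)
    (T : Fin t → (⊤ : SimpleGraph V).Subgraph)
    (htree : ∀ i, (T i).coe.IsTree) (hverts : ∀ i, (T i).verts.ncard = n)
    (hfree : ¬ HasRainbowTree T n) :
    t ≤ m * (n - 2) / n :=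
  tree_transversal_bound_general n m t hn hm T htree hverts hfree
end

section
/- Let n ≥ 2, let m be a multiple of n, and let V be a vertex set with |V| = m partitioned into m/n parts V₁,…,V_{m/n}, each of size n. Let 𝒯 be a collection of trees consisting of, for each part V_j, exactly n-2 (not necessarily distinct) spanning trees of V_j. Then |𝒯| = m(n-2)/n and 𝒯 contains no rainbow tree with n vertices. -/
/-!
Every tree of the collection lives inside a single part, so every edge of a rainbow tree joins two
vertices of one part; by connectivity the whole rainbow tree lies in one part `V_j`, and then all of
its colours are among the `n - 2` trees spanning `V_j`. A tree on `n` vertices has `n - 1` edges,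
one too many.
-/

theorem SimpleGraph.Preconnected.mem_of_adj_closed {W : Type} {G : SimpleGraph W}
    (hG : G.Preconnected) {S : Set W} (hS : ∀ a b, G.Adj a b → a ∈ S → b ∈ S)
    {u : W} (hu : u ∈ S) (v : W) : v ∈ S := by
  obtain ⟨p⟩ := hG u v
  induction p with
  | nil => exact hu
  | cons hadj _ ih => exact ih (hS _ _ hadj hu)

theorem SimpleGraph.Subgraph.ncard_edgeSet_add_one {V : Type} {G : SimpleGraph V}
    {H : G.Subgraph} [Finite H.verts] (hH : H.coe.IsTree) :
    H.edgeSet.ncard + 1 = H.verts.ncard := by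
  rw [← H.image_coe_edgeSet_coe,
    Set.ncard_image_of_injective _ (Sym2.map.injective Subtype.val_injective),
    ← Nat.card_coe_set_eq, ← Nat.card_coe_set_eq]
  exact (SimpleGraph.isTree_iff_connected_and_card.1 hH).2

theorem Set.ncard_fst_preimage_singleton {α β : Type} (a : α) :
    (Prod.fst ⁻¹' {a} : Set (α × β)).ncard = Nat.card β := by
  rw [← Set.prod_univ, Set.ncard_prod, Set.ncard_singleton, Set.ncard_univ, one_mul]

namespace IsRainbowSubtree

variable {V ι κ : Type} {T : ι → (⊤ : SimpleGraph V).Subgraph}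
  {R : (⊤ : SimpleGraph V).Subgraph} {g : Sym2 V → ι} {π : ι → κ} {P : κ → Set V}

theorem mem_of_adj (hg : ∀ e ∈ R.edgeSet, e ∈ (T (g e)).edgeSet)
    (hP : ∀ i, (T i).verts ⊆ P (π i)) {a b : V} (hab : R.Adj a b) :
    a ∈ P (π (g s(a, b))) ∧ b ∈ P (π (g s(a, b))) :=
  have hedge : (T (g s(a, b))).Adj a b := hg s(a, b) hab
  ⟨hP _ hedge.fst_mem, hP _ hedge.snd_mem⟩

theorem verts_subset_of_mem (hg : ∀ e ∈ R.edgeSet, e ∈ (T (g e)).edgeSet)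
    (hP : ∀ i, (T i).verts ⊆ P (π i)) (hdisj : Pairwise fun i j => Disjoint (P i) (P j))
    (hR : R.coe.Preconnected) {j : κ} {v : V} (hv : v ∈ R.verts) (hvj : v ∈ P j) :
    R.verts ⊆ P j := by
  have hclosed : ∀ a b : R.verts, R.coe.Adj a b → (a : V) ∈ P j → (b : V) ∈ P j := by
    intro a b hab ha
    obtain ⟨ha', hb'⟩ := mem_of_adj hg hP hab
    obtain rfl : π (g s(a, b)) = j := hdisj.eq (Set.not_disjoint_iff.2 ⟨a, ha', ha⟩)
    exact hb'
  exact fun w hw => hR.mem_of_adj_closed (S := {x | (x : V) ∈ P j}) hclosed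
    (u := ⟨v, hv⟩) hvj ⟨w, hw⟩

theorem image_edgeSet_subset_fiber (hg : ∀ e ∈ R.edgeSet, e ∈ (T (g e)).edgeSet)
    (hP : ∀ i, (T i).verts ⊆ P (π i)) (hdisj : Pairwise fun i j => Disjoint (P i) (P j))
    {j : κ} (hRj : R.verts ⊆ P j) : g '' R.edgeSet ⊆ π ⁻¹' {j} := by
  rintro _ ⟨e, he, rfl⟩
  induction e using Sym2.ind with
  | _ a b =>
    exact hdisj.eq (Set.not_disjoint_iff.2
      ⟨a, (mem_of_adj hg hP he).1, hRj (R.edge_vert he)⟩)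

theorem ncard_verts_le [Finite ι] {k : ℕ} (hR : IsRainbowSubtree T R) (hfin : R.verts.Finite)
    (hdisj : Pairwise fun i j => Disjoint (P i) (P j)) (hP : ∀ i, (T i).verts ⊆ P (π i))
    (hk : ∀ j, (π ⁻¹' {j}).ncard ≤ k) : R.verts.ncard ≤ k + 1 := by
  obtain ⟨htree, g, hinj, hg⟩ := hR
  have : Finite R.verts := hfin
  have hedges := R.ncard_edgeSet_add_one htree
  rcases R.edgeSet.eq_empty_or_nonempty with hempty | ⟨e, he⟩
  · rw [hempty, Set.ncard_empty] at hedges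
    omega
  induction e using Sym2.ind with
  | _ a b =>
    have ha := (mem_of_adj hg hP he).1
    have hRj := verts_subset_of_mem hg hP hdisj htree.connected.preconnected (R.edge_vert he) ha
    have hcolors : R.edgeSet.ncard ≤ k := calc
      R.edgeSet.ncard = (g '' R.edgeSet).ncard := hinj.ncard_image.symm
      _ ≤ (π ⁻¹' {π (g s(a, b))}).ncard :=
        Set.ncard_le_ncard (image_edgeSet_subset_fiber hg hP hdisj hRj) (Set.toFinite _)
      _ ≤ k := hk _
    omega

end IsRainbowSubtree

theorem tree_transversal_extremal_construction_general {V : Type}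
    (n m : ℕ) (hn : 2 ≤ n)
    (hdvd : n ∣ m)
    (P : Fin (m / n) → Set V)
    (hdisj : Pairwise fun i j => Disjoint (P i) (P j))
    (T : Fin (m / n) × Fin (n - 2) → (⊤ : SimpleGraph V).Subgraph)
    (hspan : ∀ p, (T p).verts = P p.1) :
    Fintype.card (Fin (m / n) × Fin (n - 2)) = m * (n - 2) / n ∧
      ¬ HasRainbowTree T n := by
  refine ⟨?_, ?_⟩
  · rw [Fintype.card_prod, Fintype.card_fin, Fintype.card_fin, Nat.div_mul_right_comm hdvd]
  · rintro ⟨R, hR, hcard⟩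
    have hfin : R.verts.Finite := Set.finite_of_ncard_ne_zero (by omega)
    have hbound := hR.ncard_verts_le hfin hdisj (fun p => (hspan p).subset)
      (fun j => (Set.ncard_fst_preimage_singleton j).trans_le (Nat.card_fin (n - 2)).le)
    omega

theorem tree_transversal_extremal_construction {V : Type} [Fintype V]
    (n m : ℕ) (hn : 2 ≤ n)
    (hm : Fintype.card V = m) (hdvd : n ∣ m)
    (P : Fin (m / n) → Set V)
    (hdisj : Pairwise fun i j => Disjoint (P i) (P j))
    (hcover : (⋃ j, P j) = Set.univ)
    (hsize : ∀ j, (P j).ncard = n)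
    (T : Fin (m / n) × Fin (n - 2) → (⊤ : SimpleGraph V).Subgraph)
    (htree : ∀ p, (T p).coe.IsTree)
    (hspan : ∀ p, (T p).verts = P p.1) :
    Fintype.card (Fin (m / n) × Fin (n - 2)) = m * (n - 2) / n ∧
      ¬ HasRainbowTree T n :=
  tree_transversal_extremal_construction_general n m hn hdvd P hdisj T hspan
end
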